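/- arXiv:2508.13510 — 2 statements merged into one kernel-verified Lean document; each statement's English description precedes it below -/
import Mathlib

section
/- Let A be an N×N Hermitian complex matrix, φ(k) = (i/√(2π)) k e^{-k²/2}, and let t, p be real numbers. Then ∫_ℝ φ(k) e^{-i k p} e^{-i k A t} dk = (p I + t A) · exp(-(p I + t A)²/2), where e^{-i k A t} and exp denote matrix exponentials and the integral is an entrywise (Bochner) integral. -/
/-!
Diagonalize `A = U diag(λ) U*`. Then `e^{-ikAt} = U diag(e^{-ikλⱼt}) U*`, and since conjugation by
`U` and `diagonal` are continuous linear maps, the integral is `U diag(∫ φ(k) e^{-ik σⱼ} dk) U*`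
with `σⱼ = p + t λⱼ`, while `p I + t A = U diag(σ) U*` makes the right-hand side
`U diag(σⱼ e^{-σⱼ²/2}) U*`. This reduces everything to the scalar identity
`∫ φ(k) e^{-iks} dk = s e^{-s²/2}`, obtained by integrating by parts against the Gaussian
`e^{-k²/2 - iks}`, whose integral is `√(2π) e^{-s²/2}`.
-/

open MeasureTheory Matrix

attribute [local instance] Matrix.normedAddCommGroup Matrix.normedSpace

open Complex Unitary

noncomputable def phi (k : ℝ) : ℂ :=
  I / (Real.sqrt (2 * Real.pi) : ℂ) * k * cexp (-(k : ℂ) ^ 2 / 2)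

section GaussianChirp

variable (s : ℝ)

lemma integrable_cexp_neg_sq_div_two_sub :
    Integrable fun k : ℝ => cexp (-(k : ℂ) ^ 2 / 2 - I * k * s) := by
  convert integrable_cexp_quadratic (b := 1 / 2) (by norm_num) (-(I * s)) 0 using 3
  ring

lemma integrable_mul_cexp_neg_sq_div_two_sub :
    Integrable fun k : ℝ => (k : ℂ) * cexp (-(k : ℂ) ^ 2 / 2 - I * k * s) := by
  refine (integrable_mul_cexp_neg_mul_sq (b := 1 / 2) (by norm_num)).congr' (by fun_prop)
    (.of_forall fun k => ?_)
  have hsplit : -(k : ℂ) ^ 2 / 2 - I * k * s = -(1 / 2) * k ^ 2 + ((-(k * s) : ℝ) : ℂ) * I := by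
    push_cast
    ring
  rw [hsplit, Complex.exp_add, ← mul_assoc, norm_mul (_ * _) (cexp _), norm_exp_ofReal_mul_I,
    mul_one]

lemma integral_cexp_neg_sq_div_two_sub :
    ∫ k : ℝ, cexp (-(k : ℂ) ^ 2 / 2 - I * k * s)
      = Real.sqrt (2 * Real.pi) * cexp (-(s : ℂ) ^ 2 / 2) := by
  have hquad (k : ℝ) : -(k : ℂ) ^ 2 / 2 - I * k * s = -1 / 2 * k ^ 2 + -(I * s) * k + 0 := by
    ring
  have hsqrt : ((Real.pi : ℂ) / -(-1 / 2)) ^ (1 / 2 : ℂ) = Real.sqrt (2 * Real.pi) := by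
    rw [Real.sqrt_eq_rpow, ofReal_cpow (by positivity)]
    push_cast
    ring_nf
  simp_rw [hquad]
  rw [integral_cexp_quadratic (by norm_num), hsqrt]
  congr 2
  linear_combination (s : ℂ) ^ 2 / 2 * I_sq

lemma hasDerivAt_cexp_neg_sq_div_two_sub (k : ℝ) :
    HasDerivAt (fun k : ℝ => cexp (-(k : ℂ) ^ 2 / 2 - I * k * s))
      ((-k - I * s) * cexp (-(k : ℂ) ^ 2 / 2 - I * k * s)) k := by
  have h : HasDerivAt (fun z : ℂ => -z ^ 2 / 2 - I * z * s) (-k - I * s) k := by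
    refine (((hasDerivAt_pow 2 (k : ℂ)).neg.div_const 2).sub
      (((hasDerivAt_id (k : ℂ)).const_mul I).mul_const (s : ℂ))).congr_deriv ?_
    push_cast
    ring
  simpa [mul_comm] using h.cexp.comp_ofReal

/-- The derivative `(-k - i s) g` of `g k = exp (-k²/2 - i k s)` has integral `0`,
so the first moment of `g` is `-i s ∫ g`. -/
lemma integral_mul_cexp_neg_sq_div_two_sub :
    ∫ k : ℝ, (k : ℂ) * cexp (-(k : ℂ) ^ 2 / 2 - I * k * s)
      = -I * s * Real.sqrt (2 * Real.pi) * cexp (-(s : ℂ) ^ 2 / 2) := by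
  have hg := integrable_cexp_neg_sq_div_two_sub s
  have hkg := integrable_mul_cexp_neg_sq_div_two_sub s
  have h := integral_eq_zero_of_hasDerivAt_of_integrable
    (hasDerivAt_cexp_neg_sq_div_two_sub s) ?_ hg
  · simp_rw [sub_mul, neg_mul] at h
    rw [integral_sub (by exact hkg.neg) (hg.const_mul _), integral_neg, integral_const_mul,
      integral_cexp_neg_sq_div_two_sub] at h
    linear_combination -h
  · convert (hkg.add (hg.const_mul (I * s))).neg using 1
    ext k
    simp only [Pi.neg_apply, Pi.add_apply]
    ring

lemma phi_mul_cexp (k : ℝ) :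
    phi k * cexp (-(I * k * s))
      = I / Real.sqrt (2 * Real.pi) * ((k : ℂ) * cexp (-(k : ℂ) ^ 2 / 2 - I * k * s)) := by
  rw [phi, sub_eq_add_neg, Complex.exp_add]
  ring

lemma integrable_phi_mul_cexp : Integrable fun k : ℝ => phi k * cexp (-(I * k * s)) := by
  simpa only [phi_mul_cexp] using (integrable_mul_cexp_neg_sq_div_two_sub s).const_mul _

lemma integral_phi_mul_cexp :
    ∫ k : ℝ, phi k * cexp (-(I * k * s)) = s * cexp (-(s : ℂ) ^ 2 / 2) := by
  have hsqrt : (Real.sqrt (2 * Real.pi) : ℂ) ≠ 0 := by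
    rw [ofReal_ne_zero, Real.sqrt_ne_zero']
    positivity
  simp_rw [phi_mul_cexp]
  rw [integral_const_mul, integral_mul_cexp_neg_sq_div_two_sub]
  field_simp
  linear_combination -(s : ℂ) * I_sq

end GaussianChirp

section UnitaryConjugation

variable {n : Type*} [Fintype n] [DecidableEq n]

lemma exp_conjStarAlgAut (U : unitary (Matrix n n ℂ)) (X : Matrix n n ℂ) :
    NormedSpace.exp (conjStarAlgAut ℂ _ U X) = conjStarAlgAut ℂ _ U (NormedSpace.exp X) := by
  simpa using Matrix.exp_units_conj (toUnits U) X

lemma conjStarAlgAut_diagonal_mul_exp (U : unitary (Matrix n n ℂ)) (v : n → ℂ) :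
    conjStarAlgAut ℂ _ U (diagonal v) * NormedSpace.exp ((-(1 / 2 : ℂ)) •
        (conjStarAlgAut ℂ _ U (diagonal v) * conjStarAlgAut ℂ _ U (diagonal v)))
      = conjStarAlgAut ℂ _ U (diagonal fun j => v j * cexp (-v j ^ 2 / 2)) := by
  rw [← map_mul, ← map_smul, exp_conjStarAlgAut, ← map_mul, diagonal_mul_diagonal,
    ← diagonal_smul, exp_diagonal, diagonal_mul_diagonal]
  congr 2 with j
  simp only [Pi.coe_exp, Pi.smul_apply, smul_eq_mul, ← Complex.exp_eq_exp_ℂ]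
  ring_nf

lemma integral_conjStarAlgAut_diagonal {α : Type*} [MeasurableSpace α] {μ : Measure α}
    (U : unitary (Matrix n n ℂ)) {f : α → n → ℂ} (hf : ∀ j, Integrable (f · j) μ) :
    ∫ x, conjStarAlgAut ℂ _ U (diagonal (f x)) ∂μ
      = conjStarAlgAut ℂ _ U (diagonal fun j => ∫ x, f x j ∂μ) := by
  let L : (n → ℂ) →L[ℂ] Matrix n n ℂ :=
    ((conjStarAlgAut ℂ _ U).toAlgEquiv.toLinearMap ∘ₗ diagonalLinearMap n ℂ ℂ).toContinuousLinearMap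
  calc ∫ x, conjStarAlgAut ℂ _ U (diagonal (f x)) ∂μ = ∫ x, L (f x) ∂μ := rfl
    _ = L (∫ x, f x ∂μ) := L.integral_comp_comm (Integrable.of_eval hf)
    _ = _ := by
      change conjStarAlgAut ℂ _ U (diagonal _) = _
      rw [funext (eval_integral hf)]

lemma Matrix.IsHermitian.exp_smul_eq {A : Matrix n n ℂ} (hA : A.IsHermitian) (z : ℂ) :
    NormedSpace.exp (z • A) = conjStarAlgAut ℂ _ hA.eigenvectorUnitary
      (diagonal fun j => cexp (z * hA.eigenvalues j)) := by
  conv_lhs => rw [hA.spectral_theorem]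
  rw [← map_smul, exp_conjStarAlgAut, ← diagonal_smul, exp_diagonal]
  congr 2 with j
  simp [← Complex.exp_eq_exp_ℂ]

lemma Matrix.IsHermitian.smul_one_add_smul_eq {A : Matrix n n ℂ} (hA : A.IsHermitian) (p t : ℝ) :
    (p : ℂ) • (1 : Matrix n n ℂ) + (t : ℂ) • A = conjStarAlgAut ℂ _ hA.eigenvectorUnitary
      (diagonal fun j => ((p + t * hA.eigenvalues j : ℝ) : ℂ)) := by
  conv_lhs => rw [hA.spectral_theorem]
  rw [← map_one (conjStarAlgAut ℂ _ hA.eigenvectorUnitary), ← map_smul, ← map_smul, ← map_add]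
  congr 1
  ext i j
  by_cases h : i = j <;> simp [h]

end UnitaryConjugation

/-- For an `N×N` Hermitian complex matrix `A`, `φ(k) = (i/√(2π)) k e^{-k²/2}`,
and reals `t`, `p`:
`∫_ℝ φ(k) e^{-ikp} e^{-ikAt} dk = (p I + t A) exp(-(p I + t A)²/2)`. -/
theorem stmt_9 {N : ℕ} (A : Matrix (Fin N) (Fin N) ℂ) (hA : A.IsHermitian) (t p : ℝ) :
    ∫ k : ℝ,
        (Complex.I / (Real.sqrt (2 * Real.pi) : ℂ) * k * Complex.exp (-(k : ℂ) ^ 2 / 2) *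
          Complex.exp (-(Complex.I * k * p))) •
          NormedSpace.exp ((-(Complex.I * k * t)) • A)
      = ((p : ℂ) • (1 : Matrix (Fin N) (Fin N) ℂ) + (t : ℂ) • A) *
          NormedSpace.exp ((-(1 / 2 : ℂ)) •
            (((p : ℂ) • (1 : Matrix (Fin N) (Fin N) ℂ) + (t : ℂ) • A) *
             ((p : ℂ) • (1 : Matrix (Fin N) (Fin N) ℂ) + (t : ℂ) • A))) := by
  have hintegrand (k : ℝ) :
      (phi k * cexp (-(I * k * p))) • NormedSpace.exp ((-(I * k * t)) • A)
        = conjStarAlgAut ℂ _ hA.eigenvectorUnitary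
            (diagonal fun j => phi k * cexp (-(I * k * (p + t * hA.eigenvalues j : ℝ)))) := by
    rw [hA.exp_smul_eq, ← map_smul, ← diagonal_smul]
    congr 2 with j
    simp only [Pi.smul_apply, smul_eq_mul, mul_assoc, ← Complex.exp_add]
    push_cast
    ring_nf
  refine (integral_congr_ae (.of_forall hintegrand)).trans ?_
  rw [integral_conjStarAlgAut_diagonal _ fun j => integrable_phi_mul_cexp _,
    hA.smul_one_add_smul_eq, conjStarAlgAut_diagonal_mul_exp]
  simp_rw [integral_phi_mul_cexp]
end

section
/- Let A be an N×N invertible Hermitian complex matrix and T ≥ 0. Then the truncation error of the time integral satisfies ‖A^{-1} - ∫_0^T t A exp(-(t²/2) A²) dt‖ ≤ ‖A^{-1}‖ · exp(-T² / (2 ‖A^{-1}‖²)), where ‖·‖ is the spectral (operator 2-) norm. -/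
open scoped Matrix.Norms.L2Operator Ring

/-!
The integrand is the derivative of `t ↦ -A⁻¹ exp(-(t²/2) A²)`, so the truncation error is exactly
`A⁻¹ exp(-(T²/2) A²) = f(A)` with `f(x) = x⁻¹ exp(-(T²/2) x²)`. By the continuous functional
calculus its norm is at most `max |f|` over the spectrum of `A`. Every eigenvalue satisfies
`|x|⁻¹ ≤ ‖A⁻¹‖`, and `r ↦ r exp(-T²/(2r²))` is increasing in `r = |x|⁻¹`, so each `|f(x)|` is
bounded by the value of that function at `r = ‖A⁻¹‖`.
-/

lemma mul_exp_neg_sq_div_sq_le {r M : ℝ} (T : ℝ) (hr : 0 < r) (hrM : r ≤ M) :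
    r * Real.exp (-T ^ 2 / (2 * r ^ 2)) ≤ M * Real.exp (-T ^ 2 / (2 * M ^ 2)) := by
  have hexp : Real.exp (-T ^ 2 / (2 * r ^ 2)) ≤ Real.exp (-T ^ 2 / (2 * M ^ 2)) := by
    rw [Real.exp_le_exp, neg_div, neg_div, neg_le_neg_iff]
    gcongr
  exact mul_le_mul hrM hexp (Real.exp_pos _).le (hr.le.trans hrM)

section Integral

variable {𝔸 : Type*} [NormedRing 𝔸] [NormedAlgebra ℂ 𝔸] [CompleteSpace 𝔸]

lemma hasDerivAt_exp_neg_sq_half_smul (b : 𝔸) (t : ℝ) :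
    HasDerivAt (fun s : ℝ => NormedSpace.exp ((-((s : ℂ) ^ 2 / 2)) • b))
      ((-(t : ℂ)) • (b * NormedSpace.exp ((-((t : ℂ) ^ 2 / 2)) • b))) t := by
  have hc : HasDerivAt (fun s : ℝ => -((s : ℂ) ^ 2 / 2)) (-(t : ℂ)) t :=
    ((hasDerivAt_pow 2 (t : ℂ)).div_const 2).neg.comp_ofReal.congr_deriv (by push_cast; ring)
  exact (hasDerivAt_exp_smul_const' b _).scomp t hc

theorem integral_smul_mul_exp_neg_sq_half_smul {a : 𝔸} (hu : IsUnit a) (T : ℝ) :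
    ∫ t in (0 : ℝ)..T, (t : ℂ) • (a * NormedSpace.exp ((-((t : ℂ) ^ 2 / 2)) • (a * a)))
      = a⁻¹ʳ - a⁻¹ʳ * NormedSpace.exp ((-((T : ℂ) ^ 2 / 2)) • (a * a)) := by
  have hderiv : ∀ t : ℝ, HasDerivAt
      (fun s : ℝ => -(a⁻¹ʳ * NormedSpace.exp ((-((s : ℂ) ^ 2 / 2)) • (a * a))))
      ((t : ℂ) • (a * NormedSpace.exp ((-((t : ℂ) ^ 2 / 2)) • (a * a)))) t := by
    intro t
    refine ((hasDerivAt_exp_neg_sq_half_smul (a * a) t).const_mul a⁻¹ʳ).neg.congr_deriv ?_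
    rw [mul_smul_comm, ← mul_assoc, ← mul_assoc, Ring.inverse_mul_cancel a hu, one_mul, neg_smul,
      neg_neg]
  have hcont : Continuous fun t : ℝ =>
      (t : ℂ) • (a * NormedSpace.exp ((-((t : ℂ) ^ 2 / 2)) • (a * a))) :=
    Complex.continuous_ofReal.smul <| continuous_const.mul <| continuous_iff_continuousAt.2
      fun t => (hasDerivAt_exp_neg_sq_half_smul (a * a) t).continuousAt
  rw [intervalIntegral.integral_eq_sub_of_hasDerivAt (fun t _ => hderiv t)
    (hcont.intervalIntegrable 0 T)]
  simp only [Complex.ofReal_zero, ne_eq, OfNat.ofNat_ne_zero, not_false_eq_true, zero_pow,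
    zero_div, neg_zero, zero_smul, NormedSpace.exp_zero, mul_one, sub_neg_eq_add]
  abel

end Integral

section CStarAlgebra

variable {A : Type*} [CStarAlgebra A] {a : A}

lemma cfc_exp_const_mul_sq (ha : IsSelfAdjoint a) (c : ℝ) :
    cfc (fun x : ℝ => Real.exp (c * x ^ 2)) a = NormedSpace.exp ((c : ℂ) • (a * a)) := by
  rw [cfc_comp' Real.exp (fun x => c * x ^ 2) a, CFC.real_exp_eq_normedSpace_exp,
    cfc_const_mul c (· ^ 2) a, cfc_pow_id a 2, Complex.coe_smul, sq]

lemma abs_inv_le_norm_ringInverse (ha : IsSelfAdjoint a) (hu : IsUnit a) {x : ℝ}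
    (hx : x ∈ spectrum ℝ a) : |x⁻¹| ≤ ‖a⁻¹ʳ‖ := by
  rw [← cfc_ringInverse_id (R := ℝ) a hu]
  exact norm_apply_le_norm_cfc (fun x : ℝ => x⁻¹) a hx
    (Units.continuousOn_inv₀_spectrum hu.unit)

theorem norm_ringInverse_mul_exp_neg_sq_le (ha : IsSelfAdjoint a) (hu : IsUnit a) (T : ℝ) :
    ‖a⁻¹ʳ * NormedSpace.exp ((-((T : ℂ) ^ 2 / 2)) • (a * a))‖
      ≤ ‖a⁻¹ʳ‖ * Real.exp (-T ^ 2 / (2 * ‖a⁻¹ʳ‖ ^ 2)) := by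
  have hcfc : a⁻¹ʳ * NormedSpace.exp ((-((T : ℂ) ^ 2 / 2)) • (a * a))
      = cfc (fun x : ℝ => x⁻¹ * Real.exp (-(T ^ 2 / 2) * x ^ 2)) a := by
    rw [cfc_mul (fun x : ℝ => x⁻¹) _ a (Units.continuousOn_inv₀_spectrum hu.unit),
      cfc_ringInverse_id (R := ℝ) a hu, cfc_exp_const_mul_sq ha]
    push_cast
    rfl
  rw [hcfc]
  refine norm_cfc_le (by positivity) fun x hx => ?_
  have hx0 : x ≠ 0 := fun h => spectrum.zero_notMem ℝ hu (h ▸ hx)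
  calc ‖x⁻¹ * Real.exp (-(T ^ 2 / 2) * x ^ 2)‖
      = |x⁻¹| * Real.exp (-T ^ 2 / (2 * |x⁻¹| ^ 2)) := by
        rw [Real.norm_eq_abs, abs_mul, Real.abs_exp, abs_inv, inv_pow, sq_abs]
        field_simp
    _ ≤ _ := mul_exp_neg_sq_div_sq_le T (by positivity)
        (abs_inv_le_norm_ringInverse ha hu hx)

end CStarAlgebra

theorem stmt_13_general {N : ℕ} (A : Matrix (Fin N) (Fin N) ℂ) (hA : A.IsHermitian)
    (hInv : IsUnit A.det) (T : ℝ) :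
    ‖A⁻¹ - ∫ t in (0:ℝ)..T, (t : ℂ) • (A * NormedSpace.exp ((-((t : ℂ) ^ 2 / 2)) • (A * A)))‖
      ≤ ‖A⁻¹‖ * Real.exp (-T ^ 2 / (2 * ‖A⁻¹‖ ^ 2)) := by
  have hu : IsUnit A := (Matrix.isUnit_iff_isUnit_det A).mpr hInv
  rw [integral_smul_mul_exp_neg_sq_half_smul hu, Matrix.nonsing_inv_eq_ringInverse, sub_sub_cancel]
  exact norm_ringInverse_mul_exp_neg_sq_le hA.isSelfAdjoint hu T

/-- For an `N×N` invertible Hermitian complex matrix `A` and `T ≥ 0`, the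
truncation error of the time integral satisfies
`‖A⁻¹ - ∫_0^T t A exp(-(t²/2) A²) dt‖ ≤ ‖A⁻¹‖ exp(-T²/(2‖A⁻¹‖²))` in the spectral norm. -/
theorem stmt_13 {N : ℕ} (A : Matrix (Fin N) (Fin N) ℂ) (hA : A.IsHermitian)
    (hInv : IsUnit A.det) (T : ℝ) (hT : 0 ≤ T) :
    ‖A⁻¹ - ∫ t in (0:ℝ)..T, (t : ℂ) • (A * NormedSpace.exp ((-((t : ℂ) ^ 2 / 2)) • (A * A)))‖
      ≤ ‖A⁻¹‖ * Real.exp (-T ^ 2 / (2 * ‖A⁻¹‖ ^ 2)) :=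
  stmt_13_general A hA hInv T
end
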